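/- arXiv:2205.15286 — 3 statements merged into one kernel-verified Lean document; each statement's English description precedes it below -/
import Mathlib

section
/- Let T be a positive integer and S̃ : {1,...,T} → {0,1} a binary sequence. Define φ(S̃)[t] = Σ_{k=1}^{t} S̃[k]·(t − k + 1) and define the output sequence S : {1,...,T} → {0,1} by S[t] = 1 if φ(S̃)[t] = 1 and S[t] = 0 otherwise. Then S[t] = 1 if and only if t is the smallest index with S̃[t] = 1; consequently Σ_{t=1}^{T} S[t] ≤ 1, with equality if and only if S̃ is not identically zero. -/
/-!
Writing `φ(S̃)[t] = S̃[t] + ∑_{k<t} S̃[k]·(t − k + 1)`, every earlier spike enters with weight at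
least `2`, so `φ(S̃)[t] = 1` exactly when `S̃[t] = 1` and no earlier spike occurred, i.e. when `t`
is the least spike. A set has at most one least element, and a nonempty set of naturals has one,
which gives the statement about `∑ S[t]`.
-/

open Finset

theorem Nat.add_sum_mul_eq_one_iff {ι : Type*} {s : Finset ι} {a w : ι → ℕ} {x : ℕ}
    (hw : ∀ i ∈ s, 2 ≤ w i) :
    x + ∑ i ∈ s, a i * w i = 1 ↔ x = 1 ∧ ∀ i ∈ s, a i = 0 := by
  constructor
  · intro h
    have hzero : ∀ i ∈ s, a i = 0 := by
      intro i hi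
      by_contra ha
      have : 2 ≤ ∑ i ∈ s, a i * w i :=
        calc 2 ≤ w i := hw i hi
          _ ≤ a i * w i := Nat.le_mul_of_pos_left _ (Nat.pos_of_ne_zero ha)
          _ ≤ ∑ i ∈ s, a i * w i := single_le_sum (f := fun i => a i * w i) (fun _ _ => Nat.zero_le _) hi
      omega
    rw [sum_eq_zero fun i hi => by rw [hzero i hi, zero_mul], add_zero] at h
    exact ⟨h, hzero⟩
  · rintro ⟨rfl, h⟩
    rw [sum_eq_zero fun i hi => by rw [h i hi, zero_mul], add_zero]

/-- The paper's `φ`. -/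
def cumulativeRamp (x : ℕ → ℕ) (t : ℕ) : ℕ :=
  ∑ k ∈ Icc 1 t, x k * (t - k + 1)

theorem cumulativeRamp_eq_one_iff {x : ℕ → ℕ} {t : ℕ} (ht : 1 ≤ t) :
    cumulativeRamp x t = 1 ↔ x t = 1 ∧ ∀ k ∈ Ico 1 t, x k = 0 := by
  rw [cumulativeRamp, ← Ico_insert_right ht, sum_insert right_notMem_Ico, Nat.sub_self,
    zero_add, mul_one]
  exact Nat.add_sum_mul_eq_one_iff fun k hk => by have := (mem_Ico.1 hk).2; omega

theorem isLeast_setOf_eq_one_iff {x : ℕ → ℕ} {t : ℕ} (ht : 1 ≤ t) :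
    IsLeast {k | 1 ≤ k ∧ x k = 1} t ↔ x t = 1 ∧ ∀ k, 1 ≤ k → k < t → x k ≠ 1 := by
  simp only [IsLeast, lowerBounds, Set.mem_ofPred_eq, ht, true_and, and_imp]
  refine and_congr_right fun _ => forall_congr' fun k => forall_congr' fun _ => ?_
  rw [← not_lt]
  exact imp_not_comm

theorem Finset.card_filter_isLeast_le_one {α : Type*} [PartialOrder α] (s : Finset α)
    (A : Set α) [DecidablePred (IsLeast A)] : #(s.filter (IsLeast A)) ≤ 1 :=
  card_le_one.2 fun _ ha _ hb => (mem_filter.1 ha).2.unique (mem_filter.1 hb).2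

theorem Nat.card_filter_isLeast_Icc_eq_one_iff {A : Set ℕ} [DecidablePred (IsLeast A)]
    {a b : ℕ} (hA : ∀ k ∈ A, a ≤ k) :
    #((Icc a b).filter (IsLeast A)) = 1 ↔ ∃ t ∈ Icc a b, t ∈ A := by
  constructor
  · intro h
    obtain ⟨t, ht⟩ := Finset.card_pos.1 (h ▸ Nat.one_pos)
    exact ⟨t, (mem_filter.1 ht).1, (mem_filter.1 ht).2.1⟩
  · rintro ⟨t, ht, htA⟩
    have hleast := isLeast_csInf ⟨t, htA⟩
    have hmem : sInf A ∈ (Icc a b).filter (IsLeast A) :=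
      mem_filter.2 ⟨mem_Icc.2 ⟨hA _ hleast.1, (hleast.2 htA).trans (mem_Icc.1 ht).2⟩, hleast⟩
    exact le_antisymm (card_filter_isLeast_le_one _ _) (Finset.card_pos.2 ⟨_, hmem⟩)

theorem stmt_5_general (T : ℕ) (St : ℕ → ℕ)
    (hSt : ∀ t ∈ Finset.Icc 1 T, St t = 0 ∨ St t = 1)
    (S : ℕ → ℕ)
    (hS : ∀ t, S t = if (∑ k ∈ Finset.Icc 1 t, St k * (t - k + 1)) = 1 then 1 else 0) :
    (∀ t ∈ Finset.Icc 1 T,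
      (S t = 1 ↔ St t = 1 ∧ ∀ k, 1 ≤ k → k < t → St k ≠ 1)) ∧
    (∑ t ∈ Finset.Icc 1 T, S t) ≤ 1 ∧
    ((∑ t ∈ Finset.Icc 1 T, S t) = 1 ↔ ∃ t ∈ Finset.Icc 1 T, St t = 1) := by
  classical
  set A := {k | 1 ≤ k ∧ St k = 1}
  have hfire : ∀ t ∈ Icc 1 T, cumulativeRamp St t = 1 ↔ IsLeast A t := by
    intro t ht
    obtain ⟨ht1, htT⟩ := mem_Icc.1 ht
    rw [cumulativeRamp_eq_one_iff ht1, isLeast_setOf_eq_one_iff ht1]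
    refine and_congr_right fun _ => ⟨fun h k hk hkt => by simp [h k (mem_Ico.2 ⟨hk, hkt⟩)],
      fun h k hk => ?_⟩
    obtain ⟨hk1, hkt⟩ := mem_Ico.1 hk
    exact (hSt k (mem_Icc.2 ⟨hk1, by omega⟩)).resolve_right (h k hk1 hkt)
  have hsum : ∑ t ∈ Icc 1 T, S t = #((Icc 1 T).filter (IsLeast A)) := by
    rw [card_filter]
    exact sum_congr rfl fun t ht => by rw [hS, ← cumulativeRamp, if_congr (hfire t ht) rfl rfl]
  refine ⟨fun t ht => ?_, hsum ▸ card_filter_isLeast_le_one _ _, ?_⟩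
  · rw [← isLeast_setOf_eq_one_iff (mem_Icc.1 ht).1, ← hfire t ht, hS, cumulativeRamp]
    split_ifs with h <;> simp [h]
  · rw [hsum, Nat.card_filter_isLeast_Icc_eq_one_iff fun k hk => hk.1]
    exact exists_congr fun t => and_congr_right fun ht => and_iff_right (mem_Icc.1 ht).1

/-- The composition g∘φ retains exactly the first spike: with
φ(S̃)[t] = ∑_{k=1}^{t} S̃[k]·(t−k+1) and S[t] = 1 iff φ(S̃)[t] = 1, the output
S[t] = 1 exactly at the smallest index with S̃ = 1, so ∑_t S[t] ≤ 1 with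
equality iff S̃ is not identically zero. -/
theorem stmt_5 (T : ℕ) (hT : 0 < T) (St : ℕ → ℕ)
    (hSt : ∀ t ∈ Finset.Icc 1 T, St t = 0 ∨ St t = 1)
    (S : ℕ → ℕ)
    (hS : ∀ t, S t = if (∑ k ∈ Finset.Icc 1 t, St k * (t - k + 1)) = 1 then 1 else 0) :
    (∀ t ∈ Finset.Icc 1 T,
      (S t = 1 ↔ St t = 1 ∧ ∀ k, 1 ≤ k → k < t → St k ≠ 1)) ∧
    (∑ t ∈ Finset.Icc 1 T, S t) ≤ 1 ∧
    ((∑ t ∈ Finset.Icc 1 T, S t) = 1 ↔ ∃ t ∈ Finset.Icc 1 T, St t = 1) :=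
  stmt_5_general T St hSt S hS
end

section
/- Let T be a positive integer and Ṽ : {1,...,T} → ℝ a real-valued sequence (the no-reset membrane potentials). Define S̃[t] = 1 if Ṽ[t] > 1 and S̃[t] = 0 otherwise; define z[t] = Σ_{k=1}^{t} S̃[k]·(t − k + 1); and define S[t] = 1 if z[t] = 1 and S[t] = 0 otherwise. Then S[t] = 1 if and only if t is the smallest index in {1,...,T} with Ṽ[t] > 1; in particular S contains at most one spike, and S is identically zero exactly when Ṽ[t] ≤ 1 for all t. -/
/-!
The encoding `φ` weights a spike at time `k` by `t - k + 1`, which is `1` only for `k = t` and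
at least `2` for every earlier spike. Hence `φ(S̃)[t] = 1` exactly when `S̃` spikes at `t` and never
before, i.e. when `t` is the first threshold crossing; there is at most one such time, and there is
one as soon as the potential crosses the threshold at all.
-/

open Finset

def IsFirstIndex (P : ℕ → Prop) (t : ℕ) : Prop :=
  P t ∧ ∀ k, 1 ≤ k → k < t → ¬ P k

theorem sum_Icc_mul_sub_add_one_eq_one_iff (s : ℕ → ℕ) {t : ℕ} (ht : 1 ≤ t) :
    ∑ k ∈ Icc 1 t, s k * (t - k + 1) = 1 ↔ s t = 1 ∧ ∀ k, 1 ≤ k → k < t → s k = 0 := by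
  have ht_mem : t ∈ Icc 1 t := mem_Icc.mpr ⟨ht, le_rfl⟩
  constructor
  · intro hsum
    have hterm : ∀ k ∈ Icc 1 t, s k * (t - k + 1) ≤ 1 := fun k hk =>
      (single_le_sum (f := fun k => s k * (t - k + 1)) (fun _ _ => Nat.zero_le _) hk).trans
        hsum.le
    have hearlier : ∀ k, 1 ≤ k → k < t → s k = 0 := by
      intro k hk hkt
      by_contra hne
      have hweight : 2 ≤ s k * (t - k + 1) :=
        calc 2 = 1 * 2 := rfl
          _ ≤ s k * (t - k + 1) := Nat.mul_le_mul (Nat.pos_of_ne_zero hne) (by omega)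
      have := hterm k (mem_Icc.mpr ⟨hk, hkt.le⟩)
      omega
    refine ⟨?_, hearlier⟩
    rwa [sum_eq_single_of_mem t ht_mem fun k hk hkt => by
      rw [hearlier k (mem_Icc.mp hk).1 (lt_of_le_of_ne (mem_Icc.mp hk).2 hkt), zero_mul],
      Nat.sub_self, zero_add, mul_one] at hsum
  · rintro ⟨hst, hearlier⟩
    rw [sum_eq_single_of_mem t ht_mem fun k hk hkt => by
      rw [hearlier k (mem_Icc.mp hk).1 (lt_of_le_of_ne (mem_Icc.mp hk).2 hkt), zero_mul], hst]
    simp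

theorem sum_Icc_ite_mul_sub_add_one_eq_one_iff (P : ℕ → Prop) [DecidablePred P] {t : ℕ}
    (ht : 1 ≤ t) :
    ∑ k ∈ Icc 1 t, (if P k then 1 else 0) * (t - k + 1) = 1 ↔ IsFirstIndex P t := by
  rw [sum_Icc_mul_sub_add_one_eq_one_iff _ ht, IsFirstIndex]
  simp

namespace IsFirstIndex

variable {P : ℕ → Prop}

theorem eq {a b : ℕ} (ha : IsFirstIndex P a) (hb : IsFirstIndex P b) (ha1 : 1 ≤ a)
    (hb1 : 1 ≤ b) : a = b := by
  rcases lt_trichotomy a b with hab | hab | hab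
  · exact absurd ha.1 (hb.2 a ha1 hab)
  · exact hab
  · exact absurd hb.1 (ha.2 b hb1 hab)

theorem exists_of_exists {T : ℕ} (h : ∃ t ∈ Icc 1 T, P t) : ∃ t ∈ Icc 1 T, IsFirstIndex P t := by
  classical
  obtain ⟨t, ht, hPt⟩ := h
  rw [mem_Icc] at ht
  have hex : ∃ n, 1 ≤ n ∧ P n := ⟨t, ht.1, hPt⟩
  obtain ⟨hm1, hPm⟩ := Nat.find_spec hex
  refine ⟨Nat.find hex, mem_Icc.mpr ⟨hm1, ?_⟩, hPm, fun k hk hkm hPk => ?_⟩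
  · exact (Nat.find_min' hex ⟨ht.1, hPt⟩).trans ht.2
  · exact Nat.find_min hex hkm ⟨hk, hPk⟩

theorem forall_not_iff {T : ℕ} :
    (∀ t ∈ Icc 1 T, ¬ IsFirstIndex P t) ↔ ∀ t ∈ Icc 1 T, ¬ P t := by
  refine ⟨fun h => ?_, fun h t ht hfirst => h t ht hfirst.1⟩
  by_contra hP
  push Not at hP
  obtain ⟨t, ht, hfirst⟩ := exists_of_exists hP
  exact h t ht hfirst

theorem sum_Icc_ite_le_one (T : ℕ) [DecidablePred (IsFirstIndex P)] :
    ∑ t ∈ Icc 1 T, (if IsFirstIndex P t then 1 else 0) ≤ 1 := by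
  rw [← card_filter]
  refine card_le_one.mpr fun a ha b hb => ?_
  rw [mem_filter, mem_Icc] at ha hb
  exact ha.2.eq hb.2 ha.1.1 hb.1.1

end IsFirstIndex

theorem stmt_6_general (T : ℕ) (V : ℕ → ℝ)
    (St : ℕ → ℕ) (hSt : ∀ t, St t = if 1 < V t then 1 else 0)
    (z : ℕ → ℕ) (hz : ∀ t, z t = ∑ k ∈ Finset.Icc 1 t, St k * (t - k + 1))
    (S : ℕ → ℕ) (hS : ∀ t, S t = if z t = 1 then 1 else 0) :
    (∀ t ∈ Finset.Icc 1 T,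
      (S t = 1 ↔ 1 < V t ∧ ∀ k, 1 ≤ k → k < t → V k ≤ 1)) ∧
    (∑ t ∈ Finset.Icc 1 T, S t) ≤ 1 ∧
    ((∀ t ∈ Finset.Icc 1 T, S t = 0) ↔ ∀ t ∈ Finset.Icc 1 T, V t ≤ 1) := by
  classical
  have hz_eq_one : ∀ t ∈ Icc 1 T, z t = 1 ↔ IsFirstIndex (1 < V ·) t := fun t ht => by
    simp only [hz, hSt]
    exact sum_Icc_ite_mul_sub_add_one_eq_one_iff _ (mem_Icc.mp ht).1
  have hS_eq : ∀ t ∈ Icc 1 T, S t = if IsFirstIndex (1 < V ·) t then 1 else 0 := fun t ht => by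
    rw [hS, if_congr (hz_eq_one t ht) rfl rfl]
  refine ⟨fun t ht => ?_, ?_, ?_⟩
  · simp [hS_eq t ht, IsFirstIndex]
  · rw [sum_congr rfl hS_eq]
    exact IsFirstIndex.sum_Icc_ite_le_one T
  · calc (∀ t ∈ Icc 1 T, S t = 0) ↔ ∀ t ∈ Icc 1 T, ¬ IsFirstIndex (1 < V ·) t :=
          forall₂_congr fun t ht => by simp [hS_eq t ht]
      _ ↔ ∀ t ∈ Icc 1 T, V t ≤ 1 := by
        simpa only [not_lt] using IsFirstIndex.forall_not_iff (P := (1 < V ·))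

/-- End-to-end correctness of g∘φ∘f: thresholding the no-reset membrane
potentials Ṽ at 1, encoding with φ, and thresholding at z = 1 yields a spike
train S with S[t] = 1 iff t is the first index with Ṽ[t] > 1; in particular S
has at most one spike, and S ≡ 0 exactly when Ṽ never exceeds the threshold. -/
theorem stmt_6 (T : ℕ) (hT : 0 < T) (V : ℕ → ℝ)
    (St : ℕ → ℕ) (hSt : ∀ t, St t = if 1 < V t then 1 else 0)
    (z : ℕ → ℕ) (hz : ∀ t, z t = ∑ k ∈ Finset.Icc 1 t, St k * (t - k + 1))
    (S : ℕ → ℕ) (hS : ∀ t, S t = if z t = 1 then 1 else 0) :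
    (∀ t ∈ Finset.Icc 1 T,
      (S t = 1 ↔ 1 < V t ∧ ∀ k, 1 ≤ k → k < t → V k ≤ 1)) ∧
    (∑ t ∈ Finset.Icc 1 T, S t) ≤ 1 ∧
    ((∀ t ∈ Finset.Icc 1 T, S t = 0) ↔ ∀ t ∈ Finset.Icc 1 T, V t ≤ 1) :=
  stmt_6_general T V St hSt z hz S hS
end

section
/- Let T be a positive integer, let β ∈ ℝ, let I : {1,...,T} → ℝ, let V₀ ∈ ℝ, and define the no-reset membrane potential Ṽ[t] = β^t·V₀ + (1 − β)·Σ_{k=1}^{t} β^{t−k}·I[k] for t ∈ {1,...,T}. Define the correct single-spike output S : {1,...,T} → {0,1} by S[t] = 1 for the smallest t (if any) with Ṽ[t] > 1 and S[t] = 0 otherwise, and define the erroneous spikes S̃[t] = 1 if Ṽ[t] > 1 else 0. Then S = g(φ(S̃)), where φ(S̃)[t] = Σ_{k=1}^{t} S̃[k]·(t − k + 1) and g(z)[t] = 1 if z[t] = 1 else 0; i.e., the composition of the convolutional no-reset potential, the threshold function, φ, and g computes exactly the first threshold crossing of Ṽ. -/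
/-- End-to-end correctness of the paper's pipeline: with no-reset potentials
Ṽ[t] = β^t·V₀ + (1 − β)·∑_{k=1}^{t} β^{t−k}·I[k], erroneous spikes
S̃[t] = 1 iff Ṽ[t] > 1, φ(S̃)[t] = ∑_{k=1}^{t} S̃[k]·(t−k+1) and
g(z)[t] = 1 iff z[t] = 1, the correct single-spike output S (i.e. S[t] = 1 at
the smallest t with Ṽ[t] > 1, if any, and 0 otherwise) satisfies S = g(φ(S̃))
on {1,…,T}. -/
theorem stmt_17 (T : ℕ) (hT : 0 < T) (β : ℝ) (I : ℕ → ℝ) (V₀ : ℝ)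
    (Vt : ℕ → ℝ)
    (hVt : ∀ t, Vt t = β ^ t * V₀ + (1 - β) * ∑ k ∈ Finset.Icc 1 t, β ^ (t - k) * I k)
    (St : ℕ → ℕ) (hSt : ∀ t, St t = if 1 < Vt t then 1 else 0)
    (S : ℕ → ℕ)
    (hS1 : ∀ t, (S t = 1 ↔ 1 < Vt t ∧ ∀ k, 1 ≤ k → k < t → Vt k ≤ 1))
    (hS0 : ∀ t, S t = 0 ∨ S t = 1) :
    ∀ t ∈ Finset.Icc 1 T,
      S t = if (∑ k ∈ Finset.Icc 1 t, St k * (t - k + 1)) = 1 then 1 else 0 := by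
  intro t ht
  simp only [Finset.mem_Icc] at ht
  obtain ⟨ht1, htT⟩ := ht
  by_cases h1 : S t = 1
  · rw [h1, if_pos]
    obtain ⟨hVt1, hprev⟩ := (hS1 t).mp h1
    rw [Finset.sum_eq_single t]
    · rw [hSt t, if_pos hVt1]; omega
    · intro k hk hkt
      simp only [Finset.mem_Icc] at hk
      rw [hSt k, if_neg (not_lt.mpr (hprev k hk.1 (lt_of_le_of_ne hk.2 hkt)))]
      simp
    · intro h; exact absurd (Finset.mem_Icc.mpr ⟨ht1, le_refl t⟩) h
  · have h0 : S t = 0 := (hS0 t).resolve_right h1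
    rw [h0, if_neg]
    intro hsum
    have hle : ∀ k ∈ Finset.Icc 1 t, St k * (t - k + 1) ≤ 1 := by
      intro k hk
      have h := Finset.single_le_sum (f := fun k => St k * (t - k + 1))
        (fun _ _ => Nat.zero_le _) hk
      omega
    have hprev : ∀ k, 1 ≤ k → k < t → Vt k ≤ 1 := by
      intro k hk1 hkt
      by_contra hgt
      push_neg at hgt
      have hStk : St k = 1 := by rw [hSt k, if_pos hgt]
      have := hle k (Finset.mem_Icc.mpr ⟨hk1, hkt.le⟩)
      rw [hStk, one_mul] at this
      omega
    have hsum' : (∑ k ∈ Finset.Icc 1 t, St k * (t - k + 1)) = St t := by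
      rw [Finset.sum_eq_single t]
      · have h : t - t + 1 = 1 := by omega
        rw [h, mul_one]
      · intro k hk hkt
        simp only [Finset.mem_Icc] at hk
        rw [hSt k, if_neg (not_lt.mpr (hprev k hk.1 (lt_of_le_of_ne hk.2 hkt)))]
        simp
      · intro h; exact absurd (Finset.mem_Icc.mpr ⟨ht1, le_refl t⟩) h
    rw [hsum'] at hsum
    have hVgt : 1 < Vt t := by
      by_contra h
      rw [hSt t, if_neg h] at hsum; omega
    exact h1 ((hS1 t).mpr ⟨hVgt, hprev⟩)
end
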